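/- Let n ≥ 2, p ∈ (1,∞), and let z ∈ ∂K_q^{n+1} \ {0} (with 1/p+1/q=1) be such that |J_z| ≥ 2, where J_z = {i : z̄_i ≠ 0}. Let F_z = {z}^⊥ ∩ K_p^{n+1}. Then there exists a continuous function w : (0,1] → {z}^⊥ \ F_z with lim_{ε↓0} w_ε = f (where f generates the ray F_z) and limsup_{ε↓0} dist(w_ε, K_p^{n+1})^(1/2) / dist(w_ε, F_z) < ∞. -/

import Mathlib

/-!
The curve is `w ε = f + ε • v` with `v = z̄_j e_i - z̄_i e_j` for two indices `i ≠ j` in `J_z`;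
it is orthogonal to `z` and vanishes where `f̄` does. The gradient of `‖·‖_p^p` at `f̄` is a
multiple of `z̄`, so `S ε = ‖f̄ + ε v̄‖_p^p` is stationary at `ε = 0`; it is also `C²` there,
because `v̄` avoids the zeros of `f̄`, where `|·|^p` need not be `C²`. Hence `S ε = 1 + O(ε²)`,
and raising the `x₀`-coordinate of `w ε` by `O(ε²)` puts it into `K_p`. On the other hand `w ε`
stays at distance at least `ε · dist(v, ℝ f) > 0` from the line `ℝ f ⊇ F_z`.
-/

open scoped RealInnerProductSpace

open Asymptotics Metric Topology

namespace Real

theorem sign_mul_abs (x : ℝ) : sign x * |x| = x := by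
  rcases lt_trichotomy x 0 with h | rfl | h
  · rw [sign_of_neg h, abs_of_neg h]; ring
  · simp
  · rw [sign_of_pos h, abs_of_pos h, one_mul]

theorem sign_mul_self (x : ℝ) : sign x * x = |x| := by
  rcases lt_trichotomy x 0 with h | rfl | h
  · rw [sign_of_neg h, abs_of_neg h]; ring
  · simp
  · rw [sign_of_pos h, abs_of_pos h, one_mul]

theorem sign_mul_of_pos {c : ℝ} (hc : 0 < c) (x : ℝ) : sign (c * x) = sign x := by
  rcases lt_trichotomy x 0 with h | rfl | h
  · rw [sign_of_neg (mul_neg_of_pos_of_neg hc h), sign_of_neg h]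
  · simp
  · rw [sign_of_pos (mul_pos hc h), sign_of_pos h]

theorem rpow_one_div_sub_one_le_abs {s p : ℝ} (hs : 0 ≤ s) (hp : 1 ≤ p) :
    s ^ (1 / p) - 1 ≤ |s - 1| := by
  have hp' : 1 / p ≤ 1 := (div_le_one (by linarith)).2 hp
  rcases le_total s 1 with h | h
  · linarith [rpow_le_one hs h (by positivity : 0 ≤ 1 / p), abs_nonneg (s - 1)]
  · linarith [rpow_le_self_of_one_le h hp', le_abs_self (s - 1)]

end Real

/-- `signedPow (q - 1)` is the derivative of `|a| ^ q / q`; the paper's `f̄` is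
`signedPow (q - 1) (-z̄ / z₀)`. -/
noncomputable def signedPow (r a : ℝ) : ℝ := Real.sign a * |a| ^ r

theorem abs_signedPow {r : ℝ} (hr : r ≠ 0) (a : ℝ) : |signedPow r a| = |a| ^ r := by
  rcases lt_trichotomy a 0 with h | rfl | h
  · rw [signedPow, Real.sign_of_neg h, abs_mul, abs_neg, abs_one, one_mul,
      abs_of_nonneg (by positivity)]
  · simp [signedPow, Real.zero_rpow hr]
  · rw [signedPow, Real.sign_of_pos h, one_mul, abs_of_nonneg (by positivity)]

theorem sign_signedPow (r a : ℝ) : Real.sign (signedPow r a) = Real.sign a := by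
  rcases lt_trichotomy a 0 with h | rfl | h
  · have hpow := Real.rpow_pos_of_pos (abs_pos.2 h.ne) r
    rw [signedPow, Real.sign_of_neg h, Real.sign_of_neg (by linarith)]
  · simp [signedPow]
  · rw [signedPow, Real.sign_of_pos h, one_mul, Real.sign_of_pos (by positivity)]

theorem signedPow_signedPow {r s : ℝ} (hrs : r * s = 1) (a : ℝ) :
    signedPow s (signedPow r a) = a := by
  rw [signedPow, sign_signedPow, abs_signedPow (left_ne_zero_of_mul_eq_one hrs),
    ← Real.rpow_mul (abs_nonneg a), hrs, Real.rpow_one, Real.sign_mul_abs]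

theorem abs_rpow_sub_one_mul_self (r a : ℝ) : |a| ^ (r - 1) * a = signedPow r a := by
  rcases eq_or_ne a 0 with rfl | h
  · simp [signedPow]
  · calc |a| ^ (r - 1) * a = |a| ^ (r - 1) * (Real.sign a * |a|) := by rw [Real.sign_mul_abs]
      _ = Real.sign a * (|a| ^ (r - 1) * |a|) := by ring
      _ = signedPow r a := by
        rw [← Real.rpow_add_one (abs_ne_zero.2 h), sub_add_cancel, signedPow]

theorem signedPow_sub_one_mul_self {q : ℝ} (hq : q ≠ 0) (a : ℝ) :
    signedPow (q - 1) a * a = |a| ^ q := by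
  rw [signedPow, mul_right_comm, Real.sign_mul_self, mul_comm,
    ← Real.rpow_add_one' (abs_nonneg a) (by simpa using hq), sub_add_cancel]

theorem isBigO_sub_sq_of_contDiffAt {E : Type*} [NormedAddCommGroup E] [NormedSpace ℝ E]
    {h : ℝ → E} {x₀ : ℝ} (hC : ContDiffAt ℝ 2 h x₀) (hd : HasDerivAt h 0 x₀) :
    (fun x => h x - h x₀) =O[𝓝 x₀] fun x => (x - x₀) ^ 2 := by
  have hdiff : ∀ᶠ x in 𝓝 x₀, DifferentiableAt ℝ h x :=
    (hC.eventually (by simp)).mono fun x hx => hx.differentiableAt (by simp)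
  have hderiv : deriv h =O[𝓝 x₀] fun x => x - x₀ := by
    have := ((hC.derivWithin (m := 1) le_rfl).differentiableAt one_ne_zero).hasDerivAt.isBigO_sub
    simpa [hd.deriv] using this
  obtain ⟨c, hc0, hc⟩ := hderiv.exists_nonneg
  obtain ⟨δ, hδ, hball⟩ := eventually_nhds_iff_ball.1 (hc.bound.and hdiff)
  refine IsBigO.of_bound c (eventually_nhds_iff_ball.2 ⟨δ, hδ, fun x hx => ?_⟩)
  have hsub : closedBall x₀ (dist x x₀) ⊆ ball x₀ δ := closedBall_subset_ball hx
  have hderiv_le : ∀ y ∈ closedBall x₀ (dist x x₀), ‖deriv h y‖ ≤ c * dist x x₀ := fun y hy =>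
    calc ‖deriv h y‖ ≤ c * ‖y - x₀‖ := (hball y (hsub hy)).1
      _ ≤ c * dist x x₀ := by rw [← dist_eq_norm]; exact mul_le_mul_of_nonneg_left hy hc0
  calc ‖h x - h x₀‖ ≤ c * dist x x₀ * ‖x - x₀‖ :=
        (convex_closedBall x₀ _).norm_image_sub_le_of_norm_deriv_le
          (fun y hy => (hball y (hsub hy)).2) hderiv_le (mem_closedBall_self dist_nonneg)
          (mem_closedBall.2 le_rfl)
    _ = c * ‖(x - x₀) ^ 2‖ := by rw [norm_pow, Real.dist_eq, Real.norm_eq_abs]; ring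

theorem contDiffAt_abs_add_mul_rpow {n : ℕ∞} (p : ℝ) {c d : ℝ} (h : c ≠ 0 ∨ d = 0) :
    ContDiffAt ℝ n (fun ε : ℝ => |c + ε * d| ^ p) 0 := by
  rcases h with hc | rfl
  · have hline : ContDiffAt ℝ n (fun ε : ℝ => c + ε * d) 0 := by fun_prop
    exact ((contDiffAt_abs (by simpa using hc)).comp 0 hline).rpow_const_of_ne (by simpa using hc)
  · simpa using contDiffAt_const

theorem hasDerivAt_abs_add_mul_rpow {p : ℝ} (hp : 1 < p) (c d : ℝ) :
    HasDerivAt (fun ε : ℝ => |c + ε * d| ^ p) (p * |c| ^ (p - 2) * c * d) 0 := by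
  have hline : HasDerivAt (fun ε : ℝ => c + ε * d) d 0 := by
    simpa using ((hasDerivAt_id (0 : ℝ)).mul_const d).const_add c
  exact ((hasDerivAt_abs_rpow c hp).comp_of_eq 0 hline (by simp)).congr_deriv (by simp)

theorem mul_infDist_le_infDist_add_smul {E : Type*} [NormedAddCommGroup E] [NormedSpace ℝ E]
    {K : Submodule ℝ E} {S : Set E} (hSK : S ⊆ K) (hS : S.Nonempty) {a : E} (ha : a ∈ K)
    (v : E) {ε : ℝ} (hε : 0 < ε) : ε * infDist v K ≤ infDist (a + ε • v) S := by
  refine (le_infDist hS).2 fun y hy => ?_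
  have hmem : ε⁻¹ • (y - a) ∈ K := K.smul_mem _ (K.sub_mem (hSK hy) ha)
  have hscale : a + ε • v - y = ε • (v - ε⁻¹ • (y - a)) := by
    rw [smul_sub, smul_inv_smul₀ hε.ne']
    abel
  calc ε * infDist v K ≤ ε * dist v (ε⁻¹ • (y - a)) :=
        mul_le_mul_of_nonneg_left (infDist_le_dist_of_mem hmem) hε.le
    _ = dist (a + ε • v) y := by
        rw [dist_eq_norm, dist_eq_norm, hscale, norm_smul, Real.norm_of_nonneg hε.le]

def pCone (n : ℕ) (p : ℝ) : Set (EuclideanSpace ℝ (Fin (n + 1))) :=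
  {x | (∑ i : Fin n, |x i.succ| ^ p) ^ (1 / p) ≤ x 0}

theorem infDist_pCone_le {n : ℕ} {p : ℝ} (x : EuclideanSpace ℝ (Fin (n + 1))) :
    infDist x (pCone n p) ≤ max ((∑ i : Fin n, |x i.succ| ^ p) ^ (1 / p) - x 0) 0 := by
  set m := max ((∑ i : Fin n, |x i.succ| ^ p) ^ (1 / p) - x 0) 0
  have hmem : x + EuclideanSpace.single 0 m ∈ pCone n p := by
    have : (∑ i : Fin n, |x i.succ| ^ p) ^ (1 / p) ≤ x 0 + m := by
      linarith [le_max_left ((∑ i : Fin n, |x i.succ| ^ p) ^ (1 / p) - x 0) 0]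
    simpa [pCone, Fin.succ_ne_zero] using this
  calc infDist x (pCone n p) ≤ dist x (x + EuclideanSpace.single 0 m) :=
        infDist_le_dist_of_mem hmem
    _ = m := by
        rw [dist_eq_norm, sub_add_cancel_left, norm_neg, PiLp.norm_single, Real.norm_of_nonneg]
        exact le_max_right _ _

theorem isBigO_infDist_add_smul_pCone {n : ℕ} {p : ℝ} (hp : 1 < p)
    {f v : EuclideanSpace ℝ (Fin (n + 1))} (hf0 : f 0 = 1) (hf : ∑ i : Fin n, |f i.succ| ^ p = 1)
    (hv0 : v 0 = 0) (hsupp : ∀ i : Fin n, f i.succ ≠ 0 ∨ v i.succ = 0)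
    (hgrad : ∑ i : Fin n, |f i.succ| ^ (p - 2) * f i.succ * v i.succ = 0) :
    (fun ε : ℝ => infDist (f + ε • v) (pCone n p)) =O[𝓝 0] fun ε => ε ^ 2 := by
  set S : ℝ → ℝ := fun ε => ∑ i : Fin n, |f i.succ + ε * v i.succ| ^ p
  have hS0 : S 0 = 1 := by simpa [S] using hf
  have hSderiv : HasDerivAt S 0 0 := by
    refine (HasDerivAt.fun_sum fun (i : Fin n) (_ : i ∈ Finset.univ) =>
      hasDerivAt_abs_add_mul_rpow hp (f i.succ) (v i.succ)).congr_deriv ?_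
    simp_rw [mul_assoc, ← Finset.mul_sum, ← mul_assoc, hgrad, mul_zero]
  have hS : (fun ε => S ε - S 0) =O[𝓝 0] fun ε => (ε - 0) ^ 2 := isBigO_sub_sq_of_contDiffAt
    (ContDiffAt.sum fun i _ => contDiffAt_abs_add_mul_rpow p (hsupp i)) hSderiv
  have hle (ε : ℝ) : infDist (f + ε • v) (pCone n p) ≤ |S ε - 1| := by
    refine (infDist_pCone_le _).trans (max_le ?_ (abs_nonneg _))
    simpa [S, hf0, hv0] using Real.rpow_one_div_sub_one_le_abs
      (Finset.sum_nonneg fun i _ => Real.rpow_nonneg (abs_nonneg _) p) hp.le (s := S ε)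
  simp only [hS0, sub_zero] at hS
  refine (isBigO_of_le _ fun ε => ?_).trans hS
  rw [Real.norm_of_nonneg infDist_nonneg, Real.norm_eq_abs]
  exact hle ε

theorem EuclideanSpace.inner_eq_mul_add_sum_succ {n : ℕ} (x y : EuclideanSpace ℝ (Fin (n + 1))) :
    ⟪x, y⟫ = x 0 * y 0 + ∑ i : Fin n, x i.succ * y i.succ := by
  simp [PiLp.inner_apply, Fin.sum_univ_succ, mul_comm]

theorem EuclideanSpace.notMem_span_singleton {ι : Type*} [Fintype ι] {v f : EuclideanSpace ℝ ι}
    {k : ι} (hv : v ≠ 0) (hvk : v k = 0) (hfk : f k ≠ 0) : v ∉ ℝ ∙ f := by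
  intro hmem
  obtain ⟨t, rfl⟩ := Submodule.mem_span_singleton.1 hmem
  obtain rfl : t = 0 := by simpa [hfk] using hvk
  exact hv (zero_smul ℝ f)

section DualRay

variable {n : ℕ} {p q : ℝ} {z f : EuclideanSpace ℝ (Fin (n + 1))}

theorem sum_abs_neg_inv_mul_rpow_eq_one (hq : q ≠ 0)
    (hz0 : z 0 = (∑ i : Fin n, |z i.succ| ^ q) ^ (1 / q)) (hz0pos : 0 < z 0) :
    ∑ i : Fin n, |-(z 0)⁻¹ * z i.succ| ^ q = 1 := by
  have hsum : ∑ i : Fin n, |z i.succ| ^ q = z 0 ^ q := by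
    rw [hz0, ← Real.rpow_mul (Finset.sum_nonneg fun i _ => by positivity), one_div_mul_cancel hq,
      Real.rpow_one]
  calc ∑ i : Fin n, |-(z 0)⁻¹ * z i.succ| ^ q = ∑ i : Fin n, (z 0)⁻¹ ^ q * |z i.succ| ^ q := by
        refine Finset.sum_congr rfl fun i _ => ?_
        rw [abs_mul, abs_neg, abs_inv, abs_of_pos hz0pos,
          Real.mul_rpow (inv_nonneg.2 hz0pos.le) (abs_nonneg _)]
    _ = 1 := by
        rw [← Finset.mul_sum, hsum, ← Real.mul_rpow (inv_nonneg.2 hz0pos.le) hz0pos.le,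
          inv_mul_cancel₀ hz0pos.ne', Real.one_rpow]

theorem succ_eq_signedPow_of_eq_neg_sign_mul (hz0pos : 0 < z 0)
    (hfi : ∀ i : Fin n, f i.succ = -Real.sign (z i.succ) * |(z 0)⁻¹ * z i.succ| ^ (q - 1))
    (i : Fin n) : f i.succ = signedPow (q - 1) (-(z 0)⁻¹ * z i.succ) := by
  rw [hfi, signedPow, neg_mul, neg_mul, Real.sign_neg, abs_neg,
    Real.sign_mul_of_pos (inv_pos.2 hz0pos), neg_mul]

theorem sum_abs_succ_rpow_eq_one (hpq : p.HolderConjugate q)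
    (hz0 : z 0 = (∑ i : Fin n, |z i.succ| ^ q) ^ (1 / q)) (hz0pos : 0 < z 0)
    (hf : ∀ i : Fin n, f i.succ = signedPow (q - 1) (-(z 0)⁻¹ * z i.succ)) :
    ∑ i : Fin n, |f i.succ| ^ p = 1 := by
  rw [← sum_abs_neg_inv_mul_rpow_eq_one hpq.symm.ne_zero hz0 hz0pos]
  refine Finset.sum_congr rfl fun i _ => ?_
  rw [hf, abs_signedPow hpq.symm.sub_one_ne_zero, ← Real.rpow_mul (abs_nonneg _),
    hpq.symm.sub_one_mul_conj]

theorem inner_eq_zero_of_succ_eq_signedPow (hq : 1 < q)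
    (hz0 : z 0 = (∑ i : Fin n, |z i.succ| ^ q) ^ (1 / q)) (hz0pos : 0 < z 0) (hf0 : f 0 = 1)
    (hf : ∀ i : Fin n, f i.succ = signedPow (q - 1) (-(z 0)⁻¹ * z i.succ)) :
    ⟪f, z⟫ = 0 := by
  have hterm (i : Fin n) : f i.succ * z i.succ = -z 0 * |-(z 0)⁻¹ * z i.succ| ^ q := by
    have hz : z i.succ = -z 0 * (-(z 0)⁻¹ * z i.succ) := by field_simp
    have hself := signedPow_sub_one_mul_self (zero_lt_one.trans hq).ne' (-(z 0)⁻¹ * z i.succ)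
    rw [hf]
    linear_combination signedPow (q - 1) (-(z 0)⁻¹ * z i.succ) * hz - z 0 * hself
  rw [EuclideanSpace.inner_eq_mul_add_sum_succ, Finset.sum_congr rfl fun i _ => hterm i,
    ← Finset.mul_sum, sum_abs_neg_inv_mul_rpow_eq_one (by linarith) hz0 hz0pos, hf0]
  ring

theorem sum_abs_succ_rpow_mul_eq_zero (hpq : p.HolderConjugate q)
    (hf : ∀ i : Fin n, f i.succ = signedPow (q - 1) (-(z 0)⁻¹ * z i.succ))
    {v : EuclideanSpace ℝ (Fin (n + 1))} (hv0 : v 0 = 0) (hvz : ⟪v, z⟫ = 0) :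
    ∑ i : Fin n, |f i.succ| ^ (p - 2) * f i.succ * v i.succ = 0 := by
  have hexp : (q - 1) * (p - 1) = 1 := by linear_combination hpq.symm.sub_one_mul_conj
  have hgrad (i : Fin n) : |f i.succ| ^ (p - 2) * f i.succ = -(z 0)⁻¹ * z i.succ := by
    rw [show p - 2 = (p - 1) - 1 by ring, abs_rpow_sub_one_mul_self, hf,
      signedPow_signedPow hexp]
  rw [EuclideanSpace.inner_eq_mul_add_sum_succ, hv0, zero_mul, zero_add] at hvz
  simp_rw [hgrad, mul_assoc, ← Finset.mul_sum, mul_comm (z _), hvz, mul_zero]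

theorem succ_ne_zero_of_succ_eq_signedPow (hq : 1 < q) (hz0pos : 0 < z 0)
    (hf : ∀ i : Fin n, f i.succ = signedPow (q - 1) (-(z 0)⁻¹ * z i.succ)) {i : Fin n}
    (hi : z i.succ ≠ 0) : f i.succ ≠ 0 := by
  rw [← abs_pos, hf, abs_signedPow (by linarith)]
  exact Real.rpow_pos_of_pos (abs_pos.2 (mul_ne_zero (by simpa using hz0pos.ne') hi)) _

end DualRay

theorem exists_orthogonal_direction {n : ℕ} {z : EuclideanSpace ℝ (Fin (n + 1))}
    (hJ : 2 ≤ {i : Fin n | z i.succ ≠ 0}.ncard) :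
    ∃ v : EuclideanSpace ℝ (Fin (n + 1)), v ≠ 0 ∧ v 0 = 0 ∧ ⟪v, z⟫ = 0 ∧
      ∀ i : Fin n, z i.succ ≠ 0 ∨ v i.succ = 0 := by
  obtain ⟨i, j, hi, hj, hij⟩ := (Set.one_lt_ncard_iff (Set.toFinite _)).1 hJ
  refine ⟨EuclideanSpace.single i.succ (z j.succ) - EuclideanSpace.single j.succ (z i.succ),
    fun h => hj ?_, ?_, ?_, fun k => ?_⟩
  · simpa [hij, Fin.succ_ne_zero] using congrArg (· i.succ) h
  · simp [Fin.succ_ne_zero]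
  · simp [inner_sub_left, EuclideanSpace.inner_single_left, mul_comm]
  · by_cases hki : k = i
    · exact .inl (hki ▸ hi)
    by_cases hkj : k = j
    · exact .inl (hkj ▸ hj)
    · exact .inr (by simp [hki, hkj])

theorem exists_rpow_half_div_le_of_isBigO {g₁ g₂ : ℝ → ℝ} (hg₁ : ∀ ε, 0 ≤ g₁ ε)
    (h₁ : g₁ =O[𝓝 0] fun ε => ε ^ 2) {c : ℝ} (hc : 0 < c) (h₂ : ∀ ε > 0, ε * c ≤ g₂ ε) :
    ∃ M : ℝ, ∀ᶠ ε in 𝓝[>] 0, g₁ ε ^ ((1 : ℝ) / 2) / g₂ ε ≤ M := by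
  obtain ⟨K, hK0, hK⟩ := h₁.exists_nonneg
  refine ⟨√K / c, ?_⟩
  filter_upwards [nhdsWithin_le_nhds hK.bound, self_mem_nhdsWithin] with ε hε (hpos : 0 < ε)
  have hsqrt : g₁ ε ^ ((1 : ℝ) / 2) ≤ √K * ε := by
    rw [← Real.sqrt_eq_rpow]
    calc √(g₁ ε) ≤ √(K * ε ^ 2) := Real.sqrt_le_sqrt (by simpa [abs_of_nonneg (hg₁ ε)] using hε)
      _ = √K * ε := by rw [Real.sqrt_mul hK0, Real.sqrt_sq hpos.le]
  calc g₁ ε ^ ((1 : ℝ) / 2) / g₂ ε ≤ √K * ε / (ε * c) :=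
        div_le_div₀ (by positivity) hsqrt (by positivity) (h₂ ε hpos)
    _ = √K / c := by field_simp

theorem stmt_13_general (n : ℕ) (p q : ℝ) (hp : 1 < p)
    (hpq : 1 / p + 1 / q = 1)
    (z : EuclideanSpace ℝ (Fin (n + 1)))
    (hz0 : z 0 = (∑ i : Fin n, |z i.succ| ^ q) ^ (1 / q)) (hz0pos : 0 < z 0)
    (hJ : 2 ≤ {i : Fin n | z i.succ ≠ 0}.ncard)
    (f : EuclideanSpace ℝ (Fin (n + 1))) (hf0 : f 0 = 1)
    (hfi : ∀ i : Fin n, f i.succ = -Real.sign (z i.succ) * |(z 0)⁻¹ * z i.succ| ^ (q - 1)) :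
    let Kp : Set (EuclideanSpace ℝ (Fin (n + 1))) :=
      {x | (∑ i : Fin n, |x i.succ| ^ p) ^ (1 / p) ≤ x 0}
    let Fz : Set (EuclideanSpace ℝ (Fin (n + 1))) := {x | ∃ t : ℝ, 0 ≤ t ∧ x = t • f}
    ∃ w : ℝ → EuclideanSpace ℝ (Fin (n + 1)),
      ContinuousOn w (Set.Ioc 0 1) ∧
      (∀ ε ∈ Set.Ioc (0 : ℝ) 1, ⟪w ε, z⟫ = 0 ∧ w ε ∉ Fz) ∧
      Filter.Tendsto w (nhdsWithin 0 (Set.Ioi 0)) (nhds f) ∧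
      ∃ M : ℝ, ∀ᶠ ε in nhdsWithin (0 : ℝ) (Set.Ioi 0),
        Metric.infDist (w ε) Kp ^ ((1 : ℝ) / 2) / Metric.infDist (w ε) Fz ≤ M := by
  intro Kp Fz
  have hpq' : p.HolderConjugate q := Real.holderConjugate_iff.2 ⟨hp, by simpa using hpq⟩
  have hf := succ_eq_signedPow_of_eq_neg_sign_mul hz0pos hfi
  obtain ⟨v, hv, hv0, hvz, hsupp⟩ := exists_orthogonal_direction hJ
  have hc : 0 < infDist v (ℝ ∙ f) :=
    ((Submodule.closed_of_finiteDimensional (ℝ ∙ f)).notMem_iff_infDist_pos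
      (Set.nonempty_of_mem (ℝ ∙ f).zero_mem)).1
      (EuclideanSpace.notMem_span_singleton hv hv0 (hf0.symm ▸ one_ne_zero))
  have hlow (ε : ℝ) (hε : 0 < ε) : ε * infDist v (ℝ ∙ f) ≤ infDist (f + ε • v) Fz :=
    mul_infDist_le_infDist_add_smul
      (by rintro _ ⟨t, -, rfl⟩; exact Submodule.smul_mem _ t (Submodule.mem_span_singleton_self f))
      (Set.nonempty_of_mem (show f ∈ Fz from ⟨1, zero_le_one, (one_smul ℝ f).symm⟩))
      (Submodule.mem_span_singleton_self f) v hε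
  have hup : (fun ε : ℝ => infDist (f + ε • v) Kp) =O[𝓝 0] fun ε => ε ^ 2 :=
    isBigO_infDist_add_smul_pCone hp hf0 (sum_abs_succ_rpow_eq_one hpq' hz0 hz0pos hf) hv0
      (fun i => (hsupp i).imp_left (succ_ne_zero_of_succ_eq_signedPow hpq'.symm.lt hz0pos hf))
      (sum_abs_succ_rpow_mul_eq_zero hpq' hf hv0 hvz)
  refine ⟨fun ε => f + ε • v, by fun_prop, fun ε hε => ⟨?_, fun hmem => ?_⟩, ?_,
    exists_rpow_half_div_le_of_isBigO (fun _ => infDist_nonneg) hup hc hlow⟩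
  · rw [inner_add_left, real_inner_smul_left, hvz, mul_zero, add_zero,
      inner_eq_zero_of_succ_eq_signedPow hpq'.symm.lt hz0 hz0pos hf0 hf]
  · have := hlow ε hε.1
    rw [infDist_zero_of_mem hmem] at this
    exact (mul_pos hε.1 hc).not_ge this
  · exact ((by fun_prop : Continuous fun ε : ℝ => f + ε • v).tendsto' 0 f (by simp)).mono_left
      nhdsWithin_le_nhds

/-- Lemma 4.5: when `|J_z| ≥ 2`, there is a curve `w_ε` in `{z}^⊥ \ F_z`
converging to `f` whose distance ratio of order `1/2` stays bounded. -/
theorem stmt_13 (n : ℕ) (hn : 2 ≤ n) (p q : ℝ) (hp : 1 < p) (hq : 1 < q)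
    (hpq : 1 / p + 1 / q = 1)
    (z : EuclideanSpace ℝ (Fin (n + 1)))
    (hz0 : z 0 = (∑ i : Fin n, |z i.succ| ^ q) ^ (1 / q)) (hz0pos : 0 < z 0)
    (hJ : 2 ≤ {i : Fin n | z i.succ ≠ 0}.ncard)
    (f : EuclideanSpace ℝ (Fin (n + 1))) (hf0 : f 0 = 1)
    (hfi : ∀ i : Fin n, f i.succ = -Real.sign (z i.succ) * |(z 0)⁻¹ * z i.succ| ^ (q - 1)) :
    let Kp : Set (EuclideanSpace ℝ (Fin (n + 1))) :=
      {x | (∑ i : Fin n, |x i.succ| ^ p) ^ (1 / p) ≤ x 0}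
    let Fz : Set (EuclideanSpace ℝ (Fin (n + 1))) := {x | ∃ t : ℝ, 0 ≤ t ∧ x = t • f}
    ∃ w : ℝ → EuclideanSpace ℝ (Fin (n + 1)),
      ContinuousOn w (Set.Ioc 0 1) ∧
      (∀ ε ∈ Set.Ioc (0 : ℝ) 1, ⟪w ε, z⟫ = 0 ∧ w ε ∉ Fz) ∧
      Filter.Tendsto w (nhdsWithin 0 (Set.Ioi 0)) (nhds f) ∧
      ∃ M : ℝ, ∀ᶠ ε in nhdsWithin (0 : ℝ) (Set.Ioi 0),
        Metric.infDist (w ε) Kp ^ ((1 : ℝ) / 2) / Metric.infDist (w ε) Fz ≤ M :=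
  stmt_13_general n p q hp hpq z hz0 hz0pos hJ f hf0 hfi
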